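/- Let z ∈ R^n, let R ∈ R^n satisfy R_1 ≥ R_2 ≥ ... ≥ R_n, let π be any permutation of [n], and let x^+ denote the isotonic projection of x onto the cone {a : a_1 ≥ a_2 ≥ ... ≥ a_n} (i.e., the Euclidean projection). Then (R + π∘z)^+ majorizes (π∘R + π∘z)^+. -/

import Mathlib

open Finset

/-- A vector is sorted in descending order. -/
def DescSorted {n : ℕ} (a : Fin n → ℝ) : Prop :=
  ∀ i j : Fin n, i ≤ j → a j ≤ a i

/-- `b` is a descending rearrangement of `a`. -/
def DescSortOf {n : ℕ} (a b : Fin n → ℝ) : Prop :=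
  (∃ σ : Equiv.Perm (Fin n), ∀ i, b i = a (σ i)) ∧ DescSorted b

/-- Partial sum of the first `k` coordinates. -/
def psum {n : ℕ} (a : Fin n → ℝ) (k : ℕ) : ℝ :=
  ∑ i ∈ Finset.univ.filter (fun i : Fin n => (i : ℕ) < k), a i

/-- `a` majorizes `b`. -/
def Majorizes {n : ℕ} (a b : Fin n → ℝ) : Prop :=
  ∀ a' b' : Fin n → ℝ, DescSortOf a a' → DescSortOf b b' →
    (∀ k : ℕ, k < n → psum b' k ≤ psum a' k) ∧ (∑ i, a' i = ∑ i, b' i)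

/-- `xp` is the Euclidean (isotonic) projection of `x` onto the descending cone
`{a : a 1 ≥ a 2 ≥ ... ≥ a n}`. -/
def IsIsoProj {n : ℕ} (x xp : Fin n → ℝ) : Prop :=
  DescSorted xp ∧
    ∀ a : Fin n → ℝ, DescSorted a → ∑ i, (x i - xp i) ^ 2 ≤ ∑ i, (x i - a i) ^ 2

/-!
Write `x = R + π∘z` and `y = π∘R + π∘z`. Shifting the first `k` coordinates of the isotonic
projection `u` of `x` up keeps it in the cone, and so does shifting them slightly down when `u`
strictly drops after position `k`; first-order optimality then gives `psum x ≤ psum u`, with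
equality at every such breakpoint (in particular `∑ u = ∑ x`). The rearrangement inequality
gives `psum y ≤ psum x`. So at each breakpoint `k` of `v = y⁺`,
`psum v k = psum y k ≤ psum x k ≤ psum u k`, and since `u` is antitone a smallest minimiser of
`psum u - psum v` is always a breakpoint of `v`.
-/

open Filter Topology

namespace DescSorted

variable {n : ℕ}

theorem antitone {a : Fin n → ℝ} (ha : DescSorted a) : Antitone a := ha

theorem eq_of_descSortOf {a b : Fin n → ℝ} (ha : DescSorted a) (h : DescSortOf a b) :
    b = a := by
  obtain ⟨⟨σ, hσ⟩, hb⟩ := h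
  have hmono : ∀ τ : Equiv.Perm (Fin n), Antitone (a ∘ τ) →
      Monotone (OrderDual.toDual ∘ a ∘ τ) := fun _ h => h.dual_right
  have := Tuple.unique_monotone (f := OrderDual.toDual ∘ a) (τ := 1)
    (hmono σ (by simpa only [Function.comp_def, ← hσ] using hb.antitone)) (hmono 1 ha)
  funext i
  simpa [hσ] using congrFun this i

end DescSorted

section PartialSums

variable {n : ℕ}

def initIndicator (k : ℕ) : Fin n → ℝ := fun i => if (i : ℕ) < k then 1 else 0

theorem antitone_initIndicator (k : ℕ) : Antitone (initIndicator (n := n) k) := by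
  intro i j hij
  have : (i : ℕ) ≤ j := hij
  unfold initIndicator
  split_ifs <;> first | omega | norm_num

theorem sum_initIndicator_mul (a : Fin n → ℝ) (k : ℕ) :
    ∑ i, initIndicator k i * a i = psum a k := by
  simp only [psum, initIndicator, Finset.sum_filter, ite_mul, one_mul, zero_mul]

theorem psum_add (a b : Fin n → ℝ) (k : ℕ) : psum (a + b) k = psum a k + psum b k :=
  Finset.sum_add_distrib

theorem psum_zero (a : Fin n → ℝ) : psum a 0 = 0 := by
  simp [psum]

theorem psum_univ (a : Fin n → ℝ) : psum a n = ∑ i, a i := by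
  simp [psum]

theorem psum_succ (a : Fin n → ℝ) {k : ℕ} (hk : k < n) :
    psum a (k + 1) = psum a k + a ⟨k, hk⟩ := by
  have : Finset.univ.filter (fun i : Fin n => (i : ℕ) < k + 1)
      = insert ⟨k, hk⟩ (Finset.univ.filter (fun i : Fin n => (i : ℕ) < k)) := by
    ext i
    simp only [Finset.mem_filter, Finset.mem_insert, Finset.mem_univ, true_and, Fin.ext_iff]
    omega
  rw [psum, this, Finset.sum_insert (by simp), add_comm]
  rfl

theorem psum_comp_perm_le {R : Fin n → ℝ} (hR : Antitone R) (σ : Equiv.Perm (Fin n))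
    (k : ℕ) : psum (R ∘ σ) k ≤ psum R k := by
  rw [← sum_initIndicator_mul, ← sum_initIndicator_mul]
  exact ((antitone_initIndicator k).monovary hR).sum_smul_comp_perm_le_sum_smul (σ := σ)

end PartialSums

theorem nonpos_of_eventually_two_mul_le {s K : ℝ}
    (h : ∀ᶠ ε in 𝓝[>] (0 : ℝ), 2 * ε * s ≤ ε ^ 2 * K) : s ≤ 0 := by
  have hlim : Tendsto (fun ε : ℝ => ε * K) (𝓝[>] 0) (𝓝 0) := by
    simpa using ((tendsto_id (x := 𝓝 (0 : ℝ))).mul_const K).mono_left nhdsWithin_le_nhds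
  have : 2 * s ≤ 0 := ge_of_tendsto hlim <| by
    filter_upwards [h, self_mem_nhdsWithin] with ε hε (hpos : 0 < ε)
    exact le_of_mul_le_mul_left (by linarith : ε * (2 * s) ≤ ε * (ε * K)) hpos
  linarith

section Projection

variable {n : ℕ} {x u : Fin n → ℝ}

/-- Vacuous at `k = 0` and `k = n`, so both ends count as breakpoints. -/
def IsBreakpoint (v : Fin n → ℝ) (k : ℕ) : Prop :=
  ∀ i j : Fin n, (i : ℕ) < k → k ≤ (j : ℕ) → v j < v i

theorem DescSorted.add_smul_initIndicator (hu : DescSorted u) {k : ℕ} {c : ℝ}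
    (h : ∀ i j : Fin n, (i : ℕ) < k → k ≤ (j : ℕ) → u j ≤ u i + c) :
    DescSorted (u + c • initIndicator k) := by
  intro i j hij
  have hij' : (i : ℕ) ≤ j := hij
  have := hu i j hij
  simp only [Pi.add_apply, Pi.smul_apply, smul_eq_mul, initIndicator]
  split_ifs with hj hi <;> first | omega | linarith | linarith [h i j ‹_› (by omega)]

theorem IsIsoProj.sum_mul_nonpos (hu : IsIsoProj x u) {d : Fin n → ℝ}
    (hd : ∀ᶠ ε in 𝓝[>] (0 : ℝ), DescSorted (u + ε • d)) :
    ∑ i, d i * (x i - u i) ≤ 0 := by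
  refine nonpos_of_eventually_two_mul_le (K := ∑ i, d i ^ 2) ?_
  filter_upwards [hd] with ε hε
  have expand : ∑ i, (x i - (u + ε • d) i) ^ 2 = ∑ i, (x i - u i) ^ 2
      - 2 * ε * ∑ i, d i * (x i - u i) + ε ^ 2 * ∑ i, d i ^ 2 := by
    simp only [Pi.add_apply, Pi.smul_apply, smul_eq_mul, Finset.mul_sum,
      ← Finset.sum_sub_distrib, ← Finset.sum_add_distrib]
    exact Finset.sum_congr rfl fun i _ => by ring
  linarith [hu.2 _ hε]

theorem sum_initIndicator_mul_sub (a b : Fin n → ℝ) (k : ℕ) :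
    ∑ i, initIndicator k i * (a i - b i) = psum a k - psum b k := by
  simp only [mul_sub, Finset.sum_sub_distrib, sum_initIndicator_mul]

theorem IsIsoProj.psum_le (hu : IsIsoProj x u) (k : ℕ) : psum x k ≤ psum u k := by
  have hsorted : ∀ᶠ ε in 𝓝[>] (0 : ℝ), DescSorted (u + ε • initIndicator k) := by
    filter_upwards [self_mem_nhdsWithin] with ε (hε : 0 < ε)
    exact hu.1.add_smul_initIndicator fun i j hi hj => by linarith [hu.1 i j (by omega)]
  have := hu.sum_mul_nonpos hsorted
  rw [sum_initIndicator_mul_sub] at this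
  linarith

theorem IsIsoProj.psum_eq_of_isBreakpoint (hu : IsIsoProj x u) {k : ℕ}
    (hk : IsBreakpoint u k) : psum u k = psum x k := by
  have hgap : ∀ᶠ ε in 𝓝 (0 : ℝ),
      ∀ i j : Fin n, (i : ℕ) < k → k ≤ (j : ℕ) → u j ≤ u i + -ε := by
    refine eventually_all.2 fun i => eventually_all.2 fun j => ?_
    by_cases hij : (i : ℕ) < k ∧ k ≤ (j : ℕ)
    · filter_upwards [eventually_lt_nhds (sub_pos.2 (hk i j hij.1 hij.2))] with ε hε _ _
      linarith
    · exact Eventually.of_forall fun ε hi hj => absurd ⟨hi, hj⟩ hij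
  have hsorted : ∀ᶠ ε in 𝓝[>] (0 : ℝ), DescSorted (u + ε • -initIndicator k) := by
    filter_upwards [nhdsWithin_le_nhds hgap] with ε hε
    rw [smul_neg, ← neg_smul]
    exact hu.1.add_smul_initIndicator hε
  have := hu.sum_mul_nonpos hsorted
  simp only [Pi.neg_apply, neg_mul, Finset.sum_neg_distrib, neg_nonpos,
    sum_initIndicator_mul_sub] at this
  linarith [hu.psum_le k]

theorem IsIsoProj.sum_eq (hu : IsIsoProj x u) : ∑ i, u i = ∑ i, x i := by
  simpa only [psum_univ] using
    hu.psum_eq_of_isBreakpoint (k := n) fun i j _ hj => absurd j.isLt (by omega)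

end Projection

section Breakpoints

variable {n : ℕ} {u v : Fin n → ℝ}

theorem psum_succ_sub_sub {k : ℕ} (hk : k < n) :
    (psum u (k + 1) - psum v (k + 1)) - (psum u k - psum v k) = u ⟨k, hk⟩ - v ⟨k, hk⟩ := by
  rw [psum_succ u hk, psum_succ v hk]
  ring

/-- A smallest minimiser `m` of `psum u - psum v` over `0, …, n` is a breakpoint of `v`:
otherwise `m = l + 1` with `u l < v l`, and `v (l + 1) ≤ u (l + 1)`, which makes `v` drop
at `m`. -/
theorem psum_le_psum_of_isBreakpoint (hu : DescSorted u) (hv : DescSorted v)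
    (h : ∀ k ≤ n, IsBreakpoint v k → psum v k ≤ psum u k) {k : ℕ} (hk : k ≤ n) :
    psum v k ≤ psum u k := by
  set D : ℕ → ℝ := fun k => psum u k - psum v k with hD
  have hex : ∃ m, m ≤ n ∧ ∀ j ≤ n, D m ≤ D j := by
    obtain ⟨m, hm, hmin⟩ := (Finset.range (n + 1)).exists_min_image D ⟨0, by simp⟩
    exact ⟨m, Nat.lt_succ_iff.1 (Finset.mem_range.1 hm),
      fun j hj => hmin j (Finset.mem_range.2 (Nat.lt_succ_iff.2 hj))⟩
  obtain ⟨hmn, hmin⟩ := Nat.find_spec hex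
  suffices 0 ≤ D (Nat.find hex) by linarith [hmin k hk]
  by_contra hneg
  obtain ⟨l, hl⟩ : ∃ l, Nat.find hex = l + 1 :=
    Nat.exists_eq_succ_of_ne_zero fun h0 => hneg (by rw [h0]; simp [hD, psum_zero])
  rw [hl] at hmn hmin hneg
  have hln : l < n := by omega
  have hdrop : u ⟨l, hln⟩ < v ⟨l, hln⟩ := by
    have hnotmin := Nat.find_min hex (show l < Nat.find hex by omega)
    push Not at hnotmin
    obtain ⟨j, hj, hjl⟩ := hnotmin hln.le
    linarith [hmin j hj, psum_succ_sub_sub (u := u) (v := v) hln]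
  have hbreak : IsBreakpoint v (l + 1) := by
    intro i j hi hj
    have hsn : l + 1 < n := by omega
    have hrise : v ⟨l + 1, hsn⟩ ≤ u ⟨l + 1, hsn⟩ := by
      linarith [hmin (l + 2) hsn, psum_succ_sub_sub (u := u) (v := v) hsn]
    calc v j ≤ v ⟨l + 1, hsn⟩ := hv _ _ (Fin.mk_le_of_le_val hj)
      _ ≤ u ⟨l + 1, hsn⟩ := hrise
      _ ≤ u ⟨l, hln⟩ := hu _ _ (Fin.mk_le_mk.2 l.le_succ)
      _ < v ⟨l, hln⟩ := hdrop
      _ ≤ v i := hv _ _ (Fin.le_def.2 (by simp; omega))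
  exact hneg (by linarith [h (l + 1) hmn hbreak])

end Breakpoints

/-- for `R` sorted descending, any `z` and any permutation `π`, the
isotonic projection `(R + π∘z)⁺` majorizes `(π∘R + π∘z)⁺`. -/
theorem stmt14 {n : ℕ} (z R : Fin n → ℝ) (hR : DescSorted R)
    (π : Equiv.Perm (Fin n)) (u v : Fin n → ℝ)
    (hu : IsIsoProj (fun i => R i + z (π i)) u)
    (hv : IsIsoProj (fun i => R (π i) + z (π i)) v) :
    Majorizes u v := by
  intro a' b' ha' hb'
  rw [hu.1.eq_of_descSortOf ha', hv.1.eq_of_descSortOf hb']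
  have hpsum_le :
      ∀ k, psum (fun i => R (π i) + z (π i)) k ≤ psum (fun i => R i + z (π i)) k := by
    intro k
    change psum (R ∘ π + z ∘ π) k ≤ psum (R + z ∘ π) k
    rw [psum_add, psum_add]
    linarith [psum_comp_perm_le hR.antitone π k]
  refine ⟨fun k hk => psum_le_psum_of_isBreakpoint hu.1 hv.1 (fun k _ hbreak => ?_) hk.le, ?_⟩
  · rw [hv.psum_eq_of_isBreakpoint hbreak]
    exact (hpsum_le k).trans (hu.psum_le k)
  · rw [hu.sum_eq, hv.sum_eq, Finset.sum_add_distrib, Finset.sum_add_distrib,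
      Equiv.sum_comp π R]
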